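/- arXiv:2105.15005 — 9 statements merged into one kernel-verified Lean document; each statement's English description precedes it below -/
import Mathlib

section
/- Let μ be a probability distribution over {-1,+1}^V with support Ω, θ ∈ (0,1), and π = μ^(θ) given by π(σ) = μ(σ)θ^{‖σ‖₊}/Z where Z = Σ_τ μ(τ)θ^{‖τ‖₊}. Define the field-dynamics transition matrix P on Ω by P(σ,τ) = Σ_{R ⊆ σ⁻¹(+1) ∩ τ⁻¹(+1)} (1-θ)^{|R|} θ^{‖σ‖₊ - |R|} · π(τ)/π_R(𝟙_R), where π_R(𝟙_R) is the probability under π that all vertices in R take value +1. Then P satisfies the detailed balance equation μ(σ)P(σ,τ) = μ(τ)P(τ,σ) for all σ,τ ∈ Ω. -/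
open Finset

/-- the field dynamics satisfies the detailed balance equation
with respect to μ.  Configurations are `V → Bool` with `true = +1`. -/
theorem field_dynamics_detailed_balance {V : Type*} [Fintype V] [DecidableEq V]
    (μ : (V → Bool) → ℝ) (hμ : ∀ τ, 0 ≤ μ τ) (hsum : ∑ τ, μ τ = 1)
    (θ : ℝ) (hθ : θ ∈ Set.Ioo (0:ℝ) 1)
    (π : (V → Bool) → ℝ)
    (hπ : ∀ τ, π τ = μ τ * θ ^ (univ.filter (fun w => τ w = true)).card /
        ∑ ρ, μ ρ * θ ^ (univ.filter (fun w => ρ w = true)).card)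
    (P : (V → Bool) → (V → Bool) → ℝ)
    (hP : ∀ σ τ, P σ τ =
      ∑ R ∈ (univ.filter (fun w => σ w = true) ∩
              univ.filter (fun w => τ w = true)).powerset,
        (1 - θ) ^ R.card * θ ^ ((univ.filter (fun w => σ w = true)).card - R.card) *
          (π τ / ∑ ρ ∈ univ.filter (fun ρ : V → Bool => ∀ w ∈ R, ρ w = true), π ρ))
    (σ τ : V → Bool) (hσ : 0 < μ σ) (hτ : 0 < μ τ) :
    μ σ * P σ τ = μ τ * P τ σ := by
  rw [hP, hP, mul_sum, mul_sum, inter_comm]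
  refine sum_congr rfl fun R hR => ?_
  rw [mem_powerset] at hR
  set a := (univ.filter (fun w => σ w = true)).card with ha
  set b := (univ.filter (fun w => τ w = true)).card with hb
  have hra : R.card ≤ a := card_le_card (hR.trans inter_subset_right)
  have hrb : R.card ≤ b := card_le_card (hR.trans inter_subset_left)
  have h1 : θ ^ (a - R.card) * θ ^ b = θ ^ (b - R.card) * θ ^ a := by
    rw [← pow_add, ← pow_add]; congr 1; omega
  rw [hπ τ, hπ σ]
  set Z := ∑ ρ, μ ρ * θ ^ (univ.filter (fun w => ρ w = true)).card
  set S := ∑ ρ ∈ univ.filter (fun ρ : V → Bool => ∀ w ∈ R, ρ w = true), π ρ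
  linear_combination (μ σ * μ τ * (1 - θ) ^ R.card / Z / S) * h1
end

section
/- Let γ > 0, λ > 0, δ ∈ (0,1), and d ≥ 1 an integer. Let x̂ be the unique positive fixed point of F(x) = λ/(γ+x)^d (i.e., x̂(γ+x̂)^d = λ). Then d·x̂/(γ+x̂) ≤ 1-δ holds if and only if λ ≤ (1-δ)·d^d·γ^{d+1}/(d-1+δ)^{d+1}. -/
/-! Since `t ↦ t (γ + t)^d` is strictly increasing on `[0, ∞)`, the condition on the fixed point
`x̂ (γ + x̂)^d = λ` is equivalent to a condition on `λ`. The inequality `d x̂ / (γ + x̂) ≤ 1 - δ`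
is linear in `x̂` after clearing denominators: it says `x̂ ≤ x* := (1 - δ) γ / (d - 1 + δ)`,
and `x* (γ + x*)^d` is exactly the stated bound on `λ`, because `γ + x* = d γ / (d - 1 + δ)`. -/

lemma strictMonoOn_mul_add_pow {γ : ℝ} (hγ : 0 ≤ γ) (d : ℕ) :
    StrictMonoOn (fun t : ℝ => t * (γ + t) ^ d) (Set.Ici 0) := by
  intro a (ha : 0 ≤ a) b _ hab
  calc a * (γ + a) ^ d ≤ a * (γ + b) ^ d := by gcongr
    _ < b * (γ + b) ^ d := by gcongr; exact pow_pos (by linarith) d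

lemma mul_div_add_le_iff {d ε γ x : ℝ} (hx : 0 < γ + x) (hε : 0 < d - ε) :
    d * x / (γ + x) ≤ ε ↔ x ≤ ε * γ / (d - ε) := by
  rw [div_le_iff₀ hx, le_div_iff₀ hε]
  constructor <;> intro h <;> linarith

lemma mul_add_pow_at_div_sub {d : ℕ} {ε γ : ℝ} (hc : (d : ℝ) - ε ≠ 0) :
    ε * γ / (d - ε) * (γ + ε * γ / (d - ε)) ^ d =
      ε * (d : ℝ) ^ d * γ ^ (d + 1) / (d - ε) ^ (d + 1) := by
  have hsum : γ + ε * γ / (d - ε) = d * γ / (d - ε) := by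
    field_simp
    ring
  rw [hsum, div_pow, mul_pow, pow_succ, pow_succ]
  field_simp

theorem hardcore_uniqueness_iff_general (γ lam δ : ℝ) (d : ℕ)
    (hγ : 0 < γ) (hδ : δ ∈ Set.Ioo (0:ℝ) 1) (hd : 1 ≤ d)
    (x : ℝ) (hx : 0 < x) (hfix : x * (γ + x) ^ d = lam) :
    (d : ℝ) * x / (γ + x) ≤ 1 - δ ↔
      lam ≤ (1 - δ) * (d : ℝ) ^ d * γ ^ (d + 1) / ((d : ℝ) - 1 + δ) ^ (d + 1) := by
  obtain ⟨hδ0, hδ1⟩ := hδ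
  have hd1 : (1 : ℝ) ≤ d := by exact_mod_cast hd
  have hc : 0 < (d : ℝ) - (1 - δ) := by linarith
  have hx' : 0 ≤ (1 - δ) * γ / ((d : ℝ) - (1 - δ)) := by
    have : 0 < 1 - δ := by linarith
    positivity
  rw [mul_div_add_le_iff (by linarith) hc, ← hfix, show (d : ℝ) - 1 + δ = d - (1 - δ) by ring,
    ← mul_add_pow_at_div_sub hc.ne']
  exact ((strictMonoOn_mul_add_pow hγ.le d).le_iff_le hx.le hx').symm

/-- hardcore (β = 0) uniqueness criterion.  If `x̂` is the unique
positive fixed point of `F(x) = λ/(γ+x)^d`, then `d·x̂/(γ+x̂) ≤ 1-δ` iff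
`λ ≤ (1-δ)·d^d·γ^{d+1}/(d-1+δ)^{d+1}`. -/
theorem hardcore_uniqueness_iff (γ lam δ : ℝ) (d : ℕ)
    (hγ : 0 < γ) (hlam : 0 < lam) (hδ : δ ∈ Set.Ioo (0:ℝ) 1) (hd : 1 ≤ d)
    (x : ℝ) (hx : 0 < x) (hfix : x * (γ + x) ^ d = lam) :
    (d : ℝ) * x / (γ + x) ≤ 1 - δ ↔
      lam ≤ (1 - δ) * (d : ℝ) ^ d * γ ^ (d + 1) / ((d : ℝ) - 1 + δ) ^ (d + 1) :=
  hardcore_uniqueness_iff_general γ lam δ d hγ hδ hd x hx hfix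
end

section
/- Let 0 < β ≤ γ with βγ < 1, and δ ∈ (0,1). If the integer d ≥ 1 satisfies d < (1-δ)·(1+√(βγ))/(1-√(βγ)), then for all x > 0 one has f_d(x) := d(1-βγ)x/((βx+1)(x+γ)) < 1-δ. -/
/-- if `d < (1-δ)·(1+√(βγ))/(1-√(βγ))` then the contraction rate
`f_d(x) = d(1-βγ)x/((βx+1)(x+γ))` is below `1-δ` for every `x > 0`. -/
theorem contraction_below_threshold (β γ δ : ℝ) (d : ℕ)
    (hβ : 0 < β) (hβγ : β ≤ γ) (h1 : β * γ < 1)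
    (hδ : δ ∈ Set.Ioo (0:ℝ) 1) (hd : 1 ≤ d)
    (hD : (d : ℝ) < (1 - δ) * (1 + Real.sqrt (β * γ)) / (1 - Real.sqrt (β * γ))) :
    ∀ x : ℝ, 0 < x →
      (d : ℝ) * (1 - β * γ) * x / ((β * x + 1) * (x + γ)) < 1 - δ := by
  intro x hx
  obtain ⟨hδ0, hδ1⟩ := hδ
  have hγ : 0 < γ := lt_of_lt_of_le hβ hβγ
  set s := Real.sqrt (β * γ) with hs
  have hs0 : 0 ≤ s := Real.sqrt_nonneg _
  have hsq : s ^ 2 = β * γ := Real.sq_sqrt (by positivity)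
  have hs1 : s < 1 := by
    nlinarith [hsq]
  have hD' : (d : ℝ) * (1 - s) < (1 - δ) * (1 + s) := by
    have := (lt_div_iff₀ (by linarith : (0:ℝ) < 1 - s)).mp hD
    nlinarith [this]
  -- AM-GM: β x² + γ ≥ 2 s x
  have hamgm : 2 * s * x ≤ β * x ^ 2 + γ := by
    have h2 : 2 * (Real.sqrt β * x) * Real.sqrt γ ≤ (Real.sqrt β * x) ^ 2 + Real.sqrt γ ^ 2 :=
      two_mul_le_add_sq _ _
    have hb : Real.sqrt β * Real.sqrt γ = s := (Real.sqrt_mul hβ.le γ).symm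
    have h3 : Real.sqrt β ^ 2 = β := Real.sq_sqrt hβ.le
    have h4 : Real.sqrt γ ^ 2 = γ := Real.sq_sqrt hγ.le
    nlinarith [h2, hb, h3, h4]
  have hden : 0 < (β * x + 1) * (x + γ) := by positivity
  rw [div_lt_iff₀ hden]
  have e1 : (d : ℝ) * (1 - β * γ) * x = (d : ℝ) * (1 - s) * ((1 + s) * x) := by
    rw [← hsq]; ring
  have e2 : (d : ℝ) * (1 - s) * ((1 + s) * x) < (1 - δ) * (1 + s) * ((1 + s) * x) :=
    mul_lt_mul_of_pos_right hD' (by positivity)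
  have e3 : (1 + s) ^ 2 * x ≤ (β * x + 1) * (x + γ) := by
    nlinarith [hamgm, hsq, hx]
  have e4 : (1 - δ) * ((1 + s) ^ 2 * x) ≤ (1 - δ) * ((β * x + 1) * (x + γ)) :=
    mul_le_mul_of_nonneg_left e3 (by linarith)
  nlinarith [e1, e2, e4]
end

section
/- Let 0 < β ≤ γ with βγ < 1, δ ∈ (0,1), and d ≥ 1 an integer with d ≥ (1-δ)(1+√(βγ))/(1-√(βγ)). Let x₁, x₂ be the two roots of d(1-βγ)x = (1-δ)(βx+1)(x+γ) (so x₁x₂ = γ/β), and define λᵢ(d) = xᵢ·((xᵢ+γ)/(βxᵢ+1))^d for i = 1,2. Then λ₁(d)·λ₂(d) = (γ/β)^{d+1}. -/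
set_option maxHeartbeats 1000000 in
/-- with `x₁, x₂` the two roots of
`d(1-βγ)x = (1-δ)(βx+1)(x+γ)` (so `x₁x₂ = γ/β`) and
`λᵢ(d) = xᵢ·((xᵢ+γ)/(βxᵢ+1))^d`, one has `λ₁(d)·λ₂(d) = (γ/β)^{d+1}`. -/
theorem lambda_product_eq (β γ δ : ℝ) (d : ℕ)
    (hβ : 0 < β) (hβγ : β ≤ γ) (h1 : β * γ < 1)
    (hδ : δ ∈ Set.Ioo (0:ℝ) 1) (hd : 1 ≤ d)
    (hD : (1 - δ) * (1 + Real.sqrt (β * γ)) / (1 - Real.sqrt (β * γ)) ≤ (d : ℝ)) :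
    let ζ : ℝ := (d : ℝ) * (1 - β * γ) - (1 - δ) * (1 + β * γ)
    let x₁ : ℝ := (ζ - Real.sqrt (ζ ^ 2 - 4 * (1 - δ) ^ 2 * β * γ)) / (2 * (1 - δ) * β)
    let x₂ : ℝ := (ζ + Real.sqrt (ζ ^ 2 - 4 * (1 - δ) ^ 2 * β * γ)) / (2 * (1 - δ) * β)
    (x₁ * ((x₁ + γ) / (β * x₁ + 1)) ^ d) * (x₂ * ((x₂ + γ) / (β * x₂ + 1)) ^ d) =
      (γ / β) ^ (d + 1) := by
  intro ζ x₁ x₂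
  obtain ⟨hδ0, hδ1⟩ := hδ
  have hγ : 0 < γ := lt_of_lt_of_le hβ hβγ
  have hβγ0 : 0 ≤ β * γ := by positivity
  have hδ' : 0 < 1 - δ := by linarith
  have hζdef : ζ = (d : ℝ) * (1 - β * γ) - (1 - δ) * (1 + β * γ) := rfl
  have hx1def : x₁ = (ζ - Real.sqrt (ζ ^ 2 - 4 * (1 - δ) ^ 2 * β * γ)) / (2 * (1 - δ) * β) :=
    rfl
  have hx2def : x₂ = (ζ + Real.sqrt (ζ ^ 2 - 4 * (1 - δ) ^ 2 * β * γ)) / (2 * (1 - δ) * β) :=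
    rfl
  clear_value x₁ x₂ ζ
  set r := Real.sqrt (β * γ) with hr
  have hr0 : 0 ≤ r := Real.sqrt_nonneg _
  have hr2 : r ^ 2 = β * γ := Real.sq_sqrt hβγ0
  have hr1 : r < 1 := by nlinarith
  have hDd : (1 - δ) * (1 + r) ≤ (d : ℝ) * (1 - r) := by
    have := (div_le_iff₀ (by linarith : (0:ℝ) < 1 - r)).mp hD
    linarith
  have hζ : 2 * (1 - δ) * r ≤ ζ := by
    rw [hζdef]
    nlinarith [hDd, hr0, hδ', hr2]
  have hζ0 : 0 ≤ ζ := by nlinarith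
  have hdisc : 0 ≤ ζ ^ 2 - 4 * (1 - δ) ^ 2 * β * γ := by
    have h2 := mul_self_le_mul_self (by positivity : (0:ℝ) ≤ 2 * (1 - δ) * r) hζ
    nlinarith [h2, hr2]
  set s := Real.sqrt (ζ ^ 2 - 4 * (1 - δ) ^ 2 * β * γ) with hs
  have hs2 : s ^ 2 = ζ ^ 2 - 4 * (1 - δ) ^ 2 * β * γ := Real.sq_sqrt hdisc
  have hs0 : 0 ≤ s := Real.sqrt_nonneg _
  have hsζ : s ≤ ζ := by nlinarith [hs2, hs0]
  have hden : (0:ℝ) < 2 * (1 - δ) * β := by positivity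
  have hx1 : 0 ≤ x₁ := by
    rw [hx1def]; exact div_nonneg (by linarith) (le_of_lt hden)
  have hx2 : 0 ≤ x₂ := by
    rw [hx2def]; exact div_nonneg (by linarith) (le_of_lt hden)
  have hb : (β:ℝ) ≠ 0 := ne_of_gt hβ
  have hδne : (1:ℝ) - δ ≠ 0 := ne_of_gt hδ'
  have hprod : x₁ * x₂ = γ / β := by
    rw [hx1def, hx2def, div_mul_div_comm, div_eq_div_iff (by positivity) hb]
    linear_combination (-β) * hs2
  have hd10 : (0:ℝ) < β * x₁ + 1 := by nlinarith
  have hd20 : (0:ℝ) < β * x₂ + 1 := by nlinarith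
  have hprodβ : x₁ * x₂ * β = γ := by
    rw [hprod]; field_simp
  have hAB : (x₁ + γ) / (β * x₁ + 1) * ((x₂ + γ) / (β * x₂ + 1)) = γ / β := by
    rw [div_mul_div_comm,
      div_eq_div_iff (by positivity : (β * x₁ + 1) * (β * x₂ + 1) ≠ 0) hb]
    linear_combination (1 - β * γ) * hprodβ
  calc (x₁ * ((x₁ + γ) / (β * x₁ + 1)) ^ d) * (x₂ * ((x₂ + γ) / (β * x₂ + 1)) ^ d)
      = (x₁ * x₂) * ((x₁ + γ) / (β * x₁ + 1) * ((x₂ + γ) / (β * x₂ + 1))) ^ d := by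
        rw [mul_pow]; ring
    _ = (γ / β) * (γ / β) ^ d := by rw [hprod, hAB]
    _ = (γ / β) ^ (d + 1) := (pow_succ' _ _).symm
end

section
/- Fix δ ∈ (0,1) and define f(t) = ((t+(1-δ))/(t-(1-δ)))^t for real t ≥ 1. Then f is monotonically decreasing on [1,∞); in particular, for every integer d ≥ 1, ((d+(1-δ))/(d-(1-δ)))^d ≤ (2-δ)/δ. -/
/-! Write `c = 1 - δ` and `x = (t + c) / (t - c) ≥ 1`. The derivative of `log f(t) = t log x` is
`log x - 2tc / (t² - c²) = log x - sinh (log x)`, which is `≤ 0` since `y ≤ sinh y` for `y ≥ 0`.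
So `f` decreases, and `f(d) ≤ f(1) = (2 - δ) / δ`. -/

open Real Set

theorem Real.log_le_half_sub_inv {x : ℝ} (hx : 1 ≤ x) : log x ≤ (x - x⁻¹) / 2 := by
  rw [← sinh_log (by linarith)]
  exact self_le_sinh_iff.mpr (log_nonneg hx)

section

variable {c t : ℝ}

lemma log_div_sub_le (hc : 0 ≤ c) (ht : c < t) :
    log ((t + c) / (t - c)) ≤ 2 * t * c / (t ^ 2 - c ^ 2) := by
  have hsub : 0 < t - c := by linarith
  have hx : 1 ≤ (t + c) / (t - c) := by rw [one_le_div hsub]; linarith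
  have hsq : t ^ 2 - c ^ 2 ≠ 0 := by nlinarith
  calc log ((t + c) / (t - c)) ≤ ((t + c) / (t - c) - ((t + c) / (t - c))⁻¹) / 2 :=
        log_le_half_sub_inv hx
    _ = 2 * t * c / (t ^ 2 - c ^ 2) := by
        rw [inv_div]
        field_simp [(by linarith : t + c ≠ 0)]
        ring

lemma hasDerivAt_mul_log_div (hc : 0 ≤ c) (ht : c < t) :
    HasDerivAt (fun s => s * log ((s + c) / (s - c)))
      (log ((t + c) / (t - c)) - 2 * t * c / (t ^ 2 - c ^ 2)) t := by
  have hadd : t + c ≠ 0 := by linarith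
  have hsub : t - c ≠ 0 := by linarith
  have hsq : t ^ 2 - c ^ 2 ≠ 0 := by nlinarith
  have hquot : HasDerivAt (fun s => (s + c) / (s - c))
      ((1 * (t - c) - (t + c) * 1) / (t - c) ^ 2) t :=
    ((hasDerivAt_id' t).add_const c).div ((hasDerivAt_id' t).sub_const c) hsub
  refine ((hasDerivAt_id' t).mul (hquot.log (div_ne_zero hadd hsub))).congr_deriv ?_
  field_simp
  ring

lemma antitoneOn_mul_log_div (hc : 0 ≤ c) :
    AntitoneOn (fun t => t * log ((t + c) / (t - c))) (Ioi c) := by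
  have hderiv (t : ℝ) (ht : t ∈ Ioi c) := hasDerivAt_mul_log_div hc ht
  refine antitoneOn_of_hasDerivWithinAt_nonpos (convex_Ioi c)
    (f' := fun t => log ((t + c) / (t - c)) - 2 * t * c / (t ^ 2 - c ^ 2))
    (fun t ht => (hderiv t ht).continuousAt.continuousWithinAt) ?_ ?_
  · rw [interior_Ioi]
    exact fun t ht => (hderiv t ht).hasDerivWithinAt
  · rw [interior_Ioi]
    exact fun t ht => sub_nonpos.mpr (log_div_sub_le hc ht)

theorem antitoneOn_div_rpow_self (hc : 0 ≤ c) :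
    AntitoneOn (fun t => ((t + c) / (t - c)) ^ t) (Ioi c) := by
  intro s hs t ht hst
  have hpos (u : ℝ) (hu : u ∈ Ioi c) : 0 < (u + c) / (u - c) := by
    have : c < u := hu
    exact div_pos (by linarith) (by linarith)
  simp only [rpow_def_of_pos (hpos s hs), rpow_def_of_pos (hpos t ht), exp_le_exp]
  rw [mul_comm, mul_comm (log _)]
  exact antitoneOn_mul_log_div hc hs ht hst

end

/-- `f(t) = ((t+(1-δ))/(t-(1-δ)))^t` is monotonically decreasing
on `[1,∞)`; in particular, for every integer `d ≥ 1`,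
`((d+(1-δ))/(d-(1-δ)))^d ≤ (2-δ)/δ`. -/
theorem f_antitone_bound (δ : ℝ) (hδ : δ ∈ Set.Ioo (0:ℝ) 1) :
    AntitoneOn (fun t : ℝ => ((t + (1 - δ)) / (t - (1 - δ))) ^ t) (Set.Ici (1:ℝ)) ∧
    ∀ d : ℕ, 1 ≤ d →
      (((d : ℝ) + (1 - δ)) / ((d : ℝ) - (1 - δ))) ^ d ≤ (2 - δ) / δ := by
  obtain ⟨hδ0, hδ1⟩ := hδ
  have hanti : AntitoneOn (fun t : ℝ => ((t + (1 - δ)) / (t - (1 - δ))) ^ t) (Ici 1) :=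
    (antitoneOn_div_rpow_self (by linarith)).mono fun t (ht : 1 ≤ t) =>
      show 1 - δ < t by linarith
  refine ⟨hanti, fun d hd => ?_⟩
  have hd1 : (1 : ℝ) ≤ d := by exact_mod_cast hd
  calc (((d : ℝ) + (1 - δ)) / ((d : ℝ) - (1 - δ))) ^ d
      = (((d : ℝ) + (1 - δ)) / ((d : ℝ) - (1 - δ))) ^ (d : ℝ) := (rpow_natCast _ d).symm
    _ ≤ ((1 + (1 - δ)) / (1 - (1 - δ))) ^ (1 : ℝ) := hanti self_mem_Ici hd1 hd1
    _ = (2 - δ) / δ := by rw [rpow_one]; ring_nf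
end

section
/- Let Δ ≥ 3 be an integer, δ ∈ (0,1), and let β be a real number with (Δ-2+δ)/(Δ-δ) ≤ β ≤ (Δ-δ)/(Δ-2+δ). Then (Δ-1)·|1-β|/(1+β) ≤ 1-δ. -/
/-- Ising contraction in the uniqueness regime: for
`(Δ-2+δ)/(Δ-δ) ≤ β ≤ (Δ-δ)/(Δ-2+δ)` one has `(Δ-1)·|1-β|/(1+β) ≤ 1-δ`. -/
theorem ising_contraction (Δ : ℕ) (hΔ : 3 ≤ Δ) (δ β : ℝ)
    (hδ : δ ∈ Set.Ioo (0:ℝ) 1)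
    (h1 : ((Δ : ℝ) - 2 + δ) / ((Δ : ℝ) - δ) ≤ β)
    (h2 : β ≤ ((Δ : ℝ) - δ) / ((Δ : ℝ) - 2 + δ)) :
    ((Δ : ℝ) - 1) * |1 - β| / (1 + β) ≤ 1 - δ := by
  obtain ⟨hδ0, hδ1⟩ := hδ
  have hD : (3:ℝ) ≤ (Δ:ℝ) := by exact_mod_cast hΔ
  have hden1 : (0:ℝ) < (Δ:ℝ) - δ := by linarith
  have hden2 : (0:ℝ) < (Δ:ℝ) - 2 + δ := by linarith
  have h1' : ((Δ : ℝ) - 2 + δ) ≤ β * ((Δ : ℝ) - δ) := by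
    rw [div_le_iff₀ hden1] at h1; linarith
  have h2' : β * ((Δ : ℝ) - 2 + δ) ≤ (Δ : ℝ) - δ := by
    rw [le_div_iff₀ hden2] at h2; linarith
  have hβ0 : 0 < β := by nlinarith
  have hβ1 : 0 < 1 + β := by linarith
  rw [div_le_iff₀ hβ1]
  rcases abs_cases (1 - β) with ⟨h, _⟩ | ⟨h, _⟩ <;> rw [h] <;> nlinarith
end

section
/- Let n ≥ 1 and C ≥ 1 be integers with 2C ≤ n. For 0 ≤ k ≤ n-1 define Γ_k = ((n-k-C)(n-k-C+1)⋯(n-k+C-1))/((n-C)(n-C+1)⋯(n+C-1)) (a ratio of products of 2C consecutive integers; Γ_0 = 1). Then for every integer ℓ with 2C ≤ ℓ ≤ n, (Σ_{k=n-ℓ}^{n-1} Γ_k)/(Σ_{k=0}^{n-1} Γ_k) = ∏_{k=-C}^{C} (ℓ+k)/(n+k). -/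
/-!
With `x⁽ᵈ⁾ = x (x + 1) ⋯ (x + d - 1)` the rising factorial, `Γ_k = (n-C-k)⁽²ᶜ⁾ / (n-C)⁽²ᶜ⁾`.
Rising factorials obey the discrete power rule `(x+1)⁽ᵈ⁺¹⁾ - x⁽ᵈ⁺¹⁾ = (d+1) (x+1)⁽ᵈ⁾`, so
`Σ_{k=n-L}^{n-1} Γ_k` telescopes to `(L-C)⁽²ᶜ⁺¹⁾ / ((2C+1) (n-C)⁽²ᶜ⁾)`, the boundary term
`(-C)⁽²ᶜ⁺¹⁾` vanishing because it contains the factor `0`. The ratio of the sums for `L = ℓ`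
and `L = n` is therefore `(ℓ-C)⁽²ᶜ⁺¹⁾ / (n-C)⁽²ᶜ⁺¹⁾ = ∏_{k=-C}^{C} (ℓ+k)/(n+k)`.
-/

open Finset Polynomial

theorem ascPochhammer_eval_eq_prod_range {R : Type*} [CommSemiring R] (d : ℕ) (x : R) :
    (ascPochhammer R d).eval x = ∏ j ∈ range d, (x + j) := by
  induction d with
  | zero => simp
  | succ d ih => rw [ascPochhammer_succ_eval, ih, prod_range_succ]

theorem ascPochhammer_succ_eval_add_one_sub {R : Type*} [CommRing R] (d : ℕ) (x : R) :
    (ascPochhammer R (d + 1)).eval (x + 1) - (ascPochhammer R (d + 1)).eval x =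
      (d + 1) * (ascPochhammer R d).eval (x + 1) := by
  have h := congrArg (eval x) (ascPochhammer_succ_comp_X_add_one (S := R) d)
  simp only [eval_comp, eval_add, eval_X, eval_one, nsmul_eq_mul, eval_natCast_mul] at h
  rw [h]; push_cast; ring

theorem mul_sum_Ico_ascPochhammer_eval_sub {R : Type*} [CommRing R] (d : ℕ) (x : R) {a b : ℕ}
    (hab : a ≤ b) :
    (d + 1) * ∑ k ∈ Ico a b, (ascPochhammer R d).eval (x - k) =
      (ascPochhammer R (d + 1)).eval (x - a) - (ascPochhammer R (d + 1)).eval (x - b) := by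
  rw [mul_sum, ← neg_sub, ← sum_Ico_sub (fun k : ℕ => (ascPochhammer R (d + 1)).eval (x - k)) hab,
    ← sum_neg_distrib]
  refine sum_congr rfl fun k _ => ?_
  have h := ascPochhammer_succ_eval_add_one_sub d (x - (k + 1 : ℕ))
  push_cast at h ⊢
  rw [show x - (k + 1) + 1 = x - k by ring] at h
  rw [← h]; ring

theorem prod_Icc_neg_add_eq_ascPochhammer_eval {R : Type*} [CommRing R] (C : ℕ) (x : R) :
    ∏ k ∈ Icc (-(C : ℤ)) C, (x + k) = (ascPochhammer R (2 * C + 1)).eval (x - C) := by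
  rw [ascPochhammer_eval_eq_prod_range]
  refine prod_nbij' (fun k => (k + C).toNat) (fun j => j - C) ?_ ?_ ?_ ?_ ?_ <;>
    intro k hk <;> simp only [mem_Icc, mem_range] at hk ⊢
  · omega
  · omega
  · omega
  · omega
  · rw [← Int.cast_natCast (k + C).toNat, Int.toNat_of_nonneg (by omega)]
    push_cast; ring

theorem gamma_ratio_eq_product_general (n C ℓ : ℕ)
    (hn : 1 ≤ n) (h2C : 2 * C ≤ n) (hℓ2 : ℓ ≤ n)
    (Γ : ℕ → ℝ)
    (hΓ : ∀ k, Γ k = (∏ j ∈ Finset.range (2 * C), ((n : ℝ) - k - C + j)) /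
        (∏ j ∈ Finset.range (2 * C), ((n : ℝ) - C + j))) :
    (∑ k ∈ Finset.Ico (n - ℓ) n, Γ k) / (∑ k ∈ Finset.range n, Γ k) =
      ∏ k ∈ Finset.Icc (-(C : ℤ)) (C : ℤ), (((ℓ : ℝ) + k) / ((n : ℝ) + k)) := by
  have hCn : (C : ℝ) < n := by exact_mod_cast (by omega : C < n)
  have hD : (ascPochhammer ℝ (2 * C)).eval ((n : ℝ) - C) ≠ 0 :=
    (ascPochhammer_pos _ _ (by linarith)).ne'
  have hsum : ∀ L ≤ n, ∑ k ∈ Ico (n - L) n, Γ k =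
      (ascPochhammer ℝ (2 * C + 1)).eval ((L : ℝ) - C) / (2 * C + 1) /
        (ascPochhammer ℝ (2 * C)).eval ((n : ℝ) - C) := by
    intro L hL
    have h := mul_sum_Ico_ascPochhammer_eval_sub (2 * C) ((n : ℝ) - C) (Nat.sub_le n L)
    rw [Nat.cast_sub hL, show (n : ℝ) - C - (n - L) = L - C by ring,
      show (n : ℝ) - C - n = -C by ring, ascPochhammer_eval_neg_coe_nat_of_lt (by omega),
      sub_zero] at h
    simp only [hΓ, ← ascPochhammer_eval_eq_prod_range, sub_right_comm _ _ (C : ℝ), ← sum_div, ← h]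
    push_cast
    field_simp
  rw [range_eq_Ico, ← Nat.sub_self n, hsum ℓ hℓ2, hsum n le_rfl, prod_div_distrib,
    prod_Icc_neg_add_eq_ascPochhammer_eval, prod_Icc_neg_add_eq_ascPochhammer_eval]
  have hQ : (ascPochhammer ℝ (2 * C + 1)).eval ((n : ℝ) - C) ≠ 0 :=
    (ascPochhammer_pos _ _ (by linarith)).ne'
  field_simp

/-- with `Γ_k` the ratio of products of `2C` consecutive integers
`(n-k-C)⋯(n-k+C-1)` over `(n-C)⋯(n+C-1)`, one has
`(Σ_{k=n-ℓ}^{n-1} Γ_k)/(Σ_{k=0}^{n-1} Γ_k) = ∏_{k=-C}^{C} (ℓ+k)/(n+k)`. -/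
theorem gamma_ratio_eq_product (n C ℓ : ℕ)
    (hn : 1 ≤ n) (hC : 1 ≤ C) (h2C : 2 * C ≤ n)
    (hℓ1 : 2 * C ≤ ℓ) (hℓ2 : ℓ ≤ n)
    (Γ : ℕ → ℝ)
    (hΓ : ∀ k, Γ k = (∏ j ∈ Finset.range (2 * C), ((n : ℝ) - k - C + j)) /
        (∏ j ∈ Finset.range (2 * C), ((n : ℝ) - C + j))) :
    (∑ k ∈ Finset.Ico (n - ℓ) n, Γ k) / (∑ k ∈ Finset.range n, Γ k) =
      ∏ k ∈ Finset.Icc (-(C : ℤ)) (C : ℤ), (((ℓ : ℝ) + k) / ((n : ℝ) + k)) :=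
  gamma_ratio_eq_product_general n C ℓ hn h2C hℓ2 Γ hΓ
end

section
/- Let 0 < β ≤ γ with βγ < 1, δ ∈ (0,1), and d ≥ 1 an integer with d ≥ (1-δ)(1+√(βγ))/(1-√(βγ)). Let ζ = d(1-βγ) - (1-δ)(1+βγ) and x₁ = (ζ - √(ζ² - 4(1-δ)²βγ))/(2(1-δ)β), and λ₁(d) = x₁·((x₁+γ)/(βx₁+1))^d. Then x₁ ≤ 2(1-δ)γ/ζ, (x₁+γ)/(βx₁+1) ≤ γ·(d+(1-δ))/(d-(1-δ)), and λ₁(d) ≤ x₁·γ^d·(2-δ)/δ. Consequently for every integer 0 ≤ s ≤ d, λ₁(d)·(βγ)^s/γ^d ≤ x₁·(2-δ)/δ. -/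
lemma aux_pow_ratio (n : ℕ) : ∀ u : ℝ, 0 ≤ u → (n : ℝ) * u < 1 →
    ((1 + u) / (1 - u)) ^ n ≤ (1 + (n : ℝ) * u) / (1 - (n : ℝ) * u) := by
  induction n with
  | zero => intro u hu h; simp
  | succ n ih =>
    intro u hu h
    have hn0 : (0:ℝ) ≤ (n : ℝ) := Nat.cast_nonneg n
    have hcast : ((n+1 : ℕ) : ℝ) = (n : ℝ) + 1 := by push_cast; ring
    rw [hcast] at h ⊢
    have hu1 : u < 1 := by nlinarith
    have hnu : (n : ℝ) * u < 1 := by nlinarith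
    have h1 : (0:ℝ) < 1 - u := by linarith
    have h2 : (0:ℝ) < 1 - (n : ℝ) * u := by linarith
    have h3 : (0:ℝ) < 1 - ((n : ℝ) + 1) * u := by linarith
    have ihu := ih u hu hnu
    have hb0 : (0:ℝ) ≤ (1 + u) / (1 - u) := by positivity
    calc ((1 + u) / (1 - u)) ^ (n + 1)
        = ((1 + u) / (1 - u)) ^ n * ((1 + u) / (1 - u)) := pow_succ _ _
      _ ≤ (1 + (n : ℝ) * u) / (1 - (n : ℝ) * u) * ((1 + u) / (1 - u)) :=
          mul_le_mul_of_nonneg_right ihu hb0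
      _ ≤ (1 + ((n : ℝ) + 1) * u) / (1 - ((n : ℝ) + 1) * u) := by
          rw [div_mul_div_comm, div_le_div_iff₀ (by positivity) h3]
          nlinarith [mul_nonneg (mul_nonneg hu hu) hu,
            mul_nonneg (mul_nonneg (mul_nonneg hn0 hu) hu) hu,
            mul_nonneg (mul_nonneg (mul_nonneg (mul_nonneg hn0 hn0) hu) hu) hu]

/-- bounds on the smaller root `x₁` and on
`λ₁(d) = x₁·((x₁+γ)/(βx₁+1))^d`:
`x₁ ≤ 2(1-δ)γ/ζ`, `(x₁+γ)/(βx₁+1) ≤ γ(d+(1-δ))/(d-(1-δ))`,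
`λ₁(d) ≤ x₁·γ^d·(2-δ)/δ`, and for every `0 ≤ s ≤ d`,
`λ₁(d)·(βγ)^s/γ^d ≤ x₁·(2-δ)/δ`. -/
theorem lambda_one_bounds (β γ δ : ℝ) (d : ℕ)
    (hβ : 0 < β) (hβγ : β ≤ γ) (h1 : β * γ < 1)
    (hδ : δ ∈ Set.Ioo (0:ℝ) 1) (hd : 1 ≤ d)
    (hD : (1 - δ) * (1 + Real.sqrt (β * γ)) / (1 - Real.sqrt (β * γ)) ≤ (d : ℝ)) :
    let ζ : ℝ := (d : ℝ) * (1 - β * γ) - (1 - δ) * (1 + β * γ)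
    let x₁ : ℝ := (ζ - Real.sqrt (ζ ^ 2 - 4 * (1 - δ) ^ 2 * β * γ)) / (2 * (1 - δ) * β)
    let lam₁ : ℝ := x₁ * ((x₁ + γ) / (β * x₁ + 1)) ^ d
    x₁ ≤ 2 * (1 - δ) * γ / ζ ∧
    (x₁ + γ) / (β * x₁ + 1) ≤ γ * ((d : ℝ) + (1 - δ)) / ((d : ℝ) - (1 - δ)) ∧
    lam₁ ≤ x₁ * γ ^ d * (2 - δ) / δ ∧
    ∀ s : ℕ, s ≤ d → lam₁ * (β * γ) ^ s / γ ^ d ≤ x₁ * (2 - δ) / δ := by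
  intro ζ x₁ lam₁
  have hζdef : ζ = (d : ℝ) * (1 - β * γ) - (1 - δ) * (1 + β * γ) := rfl
  have hx₁def : x₁ = (ζ - Real.sqrt (ζ ^ 2 - 4 * (1 - δ) ^ 2 * β * γ)) / (2 * (1 - δ) * β) := rfl
  have hlamdef : lam₁ = x₁ * ((x₁ + γ) / (β * x₁ + 1)) ^ d := rfl
  clear_value lam₁
  clear_value x₁
  clear_value ζ
  obtain ⟨hδ0, hδ1⟩ := hδ
  have hγ : 0 < γ := lt_of_lt_of_le hβ hβγ
  have hb : 0 < β * γ := mul_pos hβ hγ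
  have hs0 : 0 < Real.sqrt (β * γ) := Real.sqrt_pos.2 hb
  have hs1 : Real.sqrt (β * γ) < 1 := by
    have := Real.sqrt_lt_sqrt hb.le h1
    simpa using this
  have hss : Real.sqrt (β * γ) * Real.sqrt (β * γ) = β * γ := Real.mul_self_sqrt hb.le
  have ha0 : 0 < 1 - δ := by linarith
  have hd1 : (1:ℝ) ≤ (d : ℝ) := by exact_mod_cast hd
  have hD' : (1 - δ) * (1 + Real.sqrt (β * γ)) ≤ (d : ℝ) * (1 - Real.sqrt (β * γ)) := by
    rw [div_le_iff₀ (by linarith)] at hD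
    linarith
  have hζlb : 2 * (1 - δ) * Real.sqrt (β * γ) ≤ ζ := by
    rw [hζdef]
    nlinarith [mul_le_mul_of_nonneg_right hD'
      (by linarith : (0:ℝ) ≤ 1 + Real.sqrt (β * γ)), hss]
  have hζpos : 0 < ζ := lt_of_lt_of_le (by positivity) hζlb
  have hdisc : 0 ≤ ζ ^ 2 - 4 * (1 - δ) ^ 2 * β * γ := by
    nlinarith [hζlb, hss, mul_pos ha0 hs0]
  set S := Real.sqrt (ζ ^ 2 - 4 * (1 - δ) ^ 2 * β * γ) with hSdef
  have hS0 : 0 ≤ S := Real.sqrt_nonneg _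
  have hSS : S ^ 2 = ζ ^ 2 - 4 * (1 - δ) ^ 2 * β * γ := Real.sq_sqrt hdisc
  have hSζ : S ≤ ζ := by nlinarith [hSS, hS0, hζpos, sq_nonneg (1 - δ), mul_pos hβ hγ]
  have hx₁0 : 0 ≤ x₁ := by
    rw [hx₁def]
    apply div_nonneg (by linarith) (by positivity)
  have hkey : x₁ * ζ ≤ 2 * (1 - δ) * γ := by
    rw [hx₁def, div_mul_eq_mul_div, div_le_iff₀ (by positivity)]
    nlinarith [hSS, mul_le_mul_of_nonneg_left hSζ hS0]
  have fact1 : x₁ ≤ 2 * (1 - δ) * γ / ζ := (le_div_iff₀ hζpos).2 hkey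
  have hda : 0 < (d : ℝ) - (1 - δ) := by linarith
  have hden : 0 < β * x₁ + 1 := by have hbx := mul_nonneg hβ.le hx₁0; linarith
  have hkey' : x₁ * ((d : ℝ) * (1 - β * γ) - (1 - δ) * (1 + β * γ)) ≤ 2 * (1 - δ) * γ := by
    rw [← hζdef]; exact hkey
  have fact2 : (x₁ + γ) / (β * x₁ + 1) ≤ γ * ((d : ℝ) + (1 - δ)) / ((d : ℝ) - (1 - δ)) := by
    rw [div_le_div_iff₀ hden hda]
    have expand : γ * ((d : ℝ) + (1 - δ)) * (β * x₁ + 1) - (x₁ + γ) * ((d : ℝ) - (1 - δ))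
        = 2 * (1 - δ) * γ - x₁ * ((d : ℝ) * (1 - β * γ) - (1 - δ) * (1 + β * γ)) := by ring
    linarith [hkey', expand]
  -- the power bound
  have hd0 : (0:ℝ) < (d : ℝ) := by linarith
  have hdne : (d : ℝ) ≠ 0 := hd0.ne'
  have hu := aux_pow_ratio d ((1 - δ) / (d : ℝ)) (by positivity)
    (by rw [mul_div_cancel₀ _ hdne]; linarith)
  have e2 : (d : ℝ) * ((1 - δ) / (d : ℝ)) = 1 - δ := mul_div_cancel₀ _ hdne
  rw [e2] at hu
  have hfrac : (1 - δ) / (d : ℝ) < 1 := by rw [div_lt_one hd0]; linarith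
  have e1 : (1 + (1 - δ) / (d : ℝ)) / (1 - (1 - δ) / (d : ℝ))
      = ((d : ℝ) + (1 - δ)) / ((d : ℝ) - (1 - δ)) := by
    rw [div_eq_div_iff (by linarith : (0:ℝ) < 1 - (1 - δ) / (d : ℝ)).ne' hda.ne']
    field_simp
    try ring
  rw [e1] at hu
  have hpow : (((d : ℝ) + (1 - δ)) / ((d : ℝ) - (1 - δ))) ^ d ≤ (2 - δ) / δ := by
    calc (((d : ℝ) + (1 - δ)) / ((d : ℝ) - (1 - δ))) ^ d ≤ (1 + (1 - δ)) / (1 - (1 - δ)) := hu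
      _ = (2 - δ) / δ := by ring
  have hR0 : 0 ≤ (x₁ + γ) / (β * x₁ + 1) := div_nonneg (by linarith) hden.le
  have fact3 : lam₁ ≤ x₁ * γ ^ d * (2 - δ) / δ := by
    have h5 : ((x₁ + γ) / (β * x₁ + 1)) ^ d ≤ (γ * ((d : ℝ) + (1 - δ)) / ((d : ℝ) - (1 - δ))) ^ d :=
      pow_le_pow_left₀ hR0 fact2 d
    have h7 : (γ * ((d : ℝ) + (1 - δ)) / ((d : ℝ) - (1 - δ))) ^ d ≤ γ ^ d * ((2 - δ) / δ) := by
      rw [mul_div_assoc, mul_pow]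
      exact mul_le_mul_of_nonneg_left hpow (by positivity)
    calc lam₁ = x₁ * ((x₁ + γ) / (β * x₁ + 1)) ^ d := hlamdef
      _ ≤ x₁ * (γ ^ d * ((2 - δ) / δ)) :=
          mul_le_mul_of_nonneg_left (le_trans h5 h7) hx₁0
      _ = x₁ * γ ^ d * (2 - δ) / δ := by ring
  refine ⟨fact1, fact2, fact3, ?_⟩
  intro s _hs
  have hlam0 : 0 ≤ lam₁ := hlamdef ▸ mul_nonneg hx₁0 (pow_nonneg hR0 d)
  have hbs : (β * γ) ^ s ≤ 1 := pow_le_one₀ hb.le h1.le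
  rw [div_le_iff₀ (pow_pos hγ d)]
  calc lam₁ * (β * γ) ^ s ≤ lam₁ * 1 := mul_le_mul_of_nonneg_left hbs hlam0
    _ = lam₁ := mul_one _
    _ ≤ x₁ * γ ^ d * (2 - δ) / δ := fact3
    _ = x₁ * (2 - δ) / δ * γ ^ d := by ring
end

section
/- Let 0 < β ≤ γ with βγ < 1, let Δ̄ = (1+√(βγ))/(1-√(βγ)), let D ≥ 1 be an integer, and let c ∈ (0,1/2). Then f_D(c·√(γ/β)) ≤ 4cD/(Δ̄-1), where f_D(x) = D(1-βγ)x/((βx+1)(x+γ)). -/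
/-!
Write `s = √(βγ)` and `t = √(γ/β)`, so that `βt = s` and `ts = γ`. At `x = ct` the factor `t`
cancels from `f_D` and, with `Δ̄ - 1 = 2s/(1-s)`, the claim reduces to
`s(1+s) ≤ 2(cs+1)(c+s)`, which follows from `(cs+1)(c+s) ≥ s ≥ s²`.
-/

open Real

noncomputable def fD (D β γ x : ℝ) : ℝ := D * (1 - β * γ) * x / ((β * x + 1) * (x + γ))

lemma mul_sqrt_div_eq_sqrt_mul {β : ℝ} (hβ : 0 ≤ β) (γ : ℝ) : β * √(γ / β) = √(β * γ) := by
  rw [sqrt_div' γ hβ, mul_div_left_comm, div_sqrt, sqrt_mul hβ, mul_comm]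

lemma sqrt_div_mul_sqrt_mul {β γ : ℝ} (hβ : 0 < β) (hγ : 0 ≤ γ) :
    √(γ / β) * √(β * γ) = γ := by
  rw [← sqrt_mul (div_nonneg hγ hβ.le), show γ / β * (β * γ) = γ * γ by field_simp,
    sqrt_mul_self hγ]

lemma fD_mul_sqrt_div (D c : ℝ) {β γ : ℝ} (hβ : 0 < β) (hγ : 0 < γ) :
    fD D β γ (c * √(γ / β)) =
      D * (1 - β * γ) * c / ((c * √(β * γ) + 1) * (c + √(β * γ))) := by
  have ht : √(γ / β) ≠ 0 := (sqrt_pos.2 (div_pos hγ hβ)).ne'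
  have hden : (β * (c * √(γ / β)) + 1) * (c * √(γ / β) + γ) =
      (c * √(β * γ) + 1) * (c + √(β * γ)) * √(γ / β) := by
    linear_combination (c * (c * √(γ / β) + γ)) * mul_sqrt_div_eq_sqrt_mul hβ.le γ -
      (c * √(β * γ) + 1) * sqrt_div_mul_sqrt_mul hβ hγ.le
  rw [fD, hden, ← mul_assoc, mul_div_mul_right _ _ ht]

lemma one_add_div_one_sub_sub_one {s : ℝ} (hs : s ≠ 1) :
    (1 + s) / (1 - s) - 1 = 2 * s / (1 - s) := by
  rw [div_sub_one (sub_ne_zero.2 hs.symm)]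
  ring

lemma mul_one_add_le_two_mul {c s : ℝ} (hc : 0 ≤ c) (hs₀ : 0 ≤ s) (hs₁ : s ≤ 1) :
    s * (1 + s) ≤ 2 * ((c * s + 1) * (c + s)) := by
  nlinarith [mul_nonneg hc hs₀, mul_nonneg (mul_nonneg hc hs₀) hc,
    mul_nonneg (mul_nonneg hc hs₀) hs₀]

lemma mul_one_sub_sq_mul_div_le {D c s : ℝ} (hD : 0 ≤ D) (hc : 0 < c) (hs₀ : 0 < s)
    (hs₁ : s < 1) :
    D * (1 - s ^ 2) * c / ((c * s + 1) * (c + s)) ≤ 2 * c * D * (1 - s) / s := by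
  rw [div_le_div_iff₀ (by positivity) hs₀]
  have hfac : 0 ≤ D * (1 - s) * c := mul_nonneg (mul_nonneg hD (by linarith)) hc.le
  nlinarith [mul_le_mul_of_nonneg_left (mul_one_add_le_two_mul hc.le hs₀.le hs₁.le) hfac]

theorem fD_at_c_sqrt_bound_general (β γ : ℝ) (hβ : 0 < β) (hβγ : β ≤ γ) (h1 : β * γ < 1)
    (D : ℕ) (c : ℝ) (hc : c ∈ Set.Ioo (0:ℝ) (1/2)) :
    (D : ℝ) * (1 - β * γ) * (c * Real.sqrt (γ / β)) /
        ((β * (c * Real.sqrt (γ / β)) + 1) * (c * Real.sqrt (γ / β) + γ)) ≤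
      4 * c * (D : ℝ) /
        ((1 + Real.sqrt (β * γ)) / (1 - Real.sqrt (β * γ)) - 1) := by
  have hγ : 0 < γ := hβ.trans_le hβγ
  have hs₀ : 0 < √(β * γ) := sqrt_pos.2 (mul_pos hβ hγ)
  have hs₁ : √(β * γ) < 1 := (sqrt_lt' one_pos).2 (by rwa [one_pow])
  change fD D β γ (c * √(γ / β)) ≤ _
  rw [fD_mul_sqrt_div _ c hβ hγ, one_add_div_one_sub_sub_one hs₁.ne,
    show 1 - β * γ = 1 - √(β * γ) ^ 2 by rw [sq_sqrt (mul_pos hβ hγ).le]]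
  calc _ ≤ 2 * c * D * (1 - √(β * γ)) / √(β * γ) :=
        mul_one_sub_sq_mul_div_le D.cast_nonneg hc.1 hs₀ hs₁
    _ = _ := by
        field_simp [(sub_pos.2 hs₁).ne']
        ring

/-- with `Δ̄ = (1+√(βγ))/(1-√(βγ))` and `c ∈ (0, 1/2)`,
`f_D(c·√(γ/β)) ≤ 4cD/(Δ̄-1)`. -/
theorem fD_at_c_sqrt_bound (β γ : ℝ) (hβ : 0 < β) (hβγ : β ≤ γ) (h1 : β * γ < 1)
    (D : ℕ) (hD : 1 ≤ D) (c : ℝ) (hc : c ∈ Set.Ioo (0:ℝ) (1/2)) :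
    (D : ℝ) * (1 - β * γ) * (c * Real.sqrt (γ / β)) /
        ((β * (c * Real.sqrt (γ / β)) + 1) * (c * Real.sqrt (γ / β) + γ)) ≤
      4 * c * (D : ℝ) /
        ((1 + Real.sqrt (β * γ)) / (1 - Real.sqrt (β * γ)) - 1) :=
  fD_at_c_sqrt_bound_general β γ hβ hβγ h1 D c hc
end
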